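/- For a ∈ [2, 24] and Y ∈ [0, 1/2], define f_n(a, Y) = (π(n - Y)⁵ - (5/a)(n - Y)³ - (1/4)(n - Y))·exp(-aπ(n - Y)²). Then for every integer n ≥ 2, f_n(a, Y) ≥ 0 and f_{-n}(a, Y) ≤ 0. -/

import Mathlib

/-!
The factor `exp (-a π x²)` is positive, so only the sign of the odd quintic
`π x⁵ - (5/a) x³ - x/4` matters. For `x ≥ 3/2` and `5/a ≤ 5/2` it is at least
`x (x² (π x² - 5/2) - 1/4) ≥ x (9/4 · 17/4 - 1/4) > 0`; oddness handles `x ≤ -3/2`.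
-/

open Real

lemma pi_mul_pow_five_sub_nonneg {c x : ℝ} (hc : c ≤ 5 / 2) (hx : 3 / 2 ≤ x) :
    0 ≤ π * x ^ 5 - c * x ^ 3 - 1 / 4 * x := by
  have hx2 : 9 / 4 ≤ x ^ 2 := by nlinarith
  have hquartic : 1 / 4 ≤ π * x ^ 4 - c * x ^ 2 :=
    calc (1 : ℝ) / 4 ≤ 9 / 4 * (3 * (9 / 4) - 5 / 2) := by norm_num
      _ ≤ x ^ 2 * (π * x ^ 2 - 5 / 2) := by
          gcongr
          nlinarith [pi_gt_three]
      _ ≤ π * x ^ 4 - c * x ^ 2 := by nlinarith [sq_nonneg x]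
  have hx0 : 0 ≤ x := by linarith
  nlinarith [mul_le_mul_of_nonneg_left hquartic hx0]

lemma pi_mul_pow_five_sub_nonpos {c x : ℝ} (hc : c ≤ 5 / 2) (hx : x ≤ -(3 / 2)) :
    π * x ^ 5 - c * x ^ 3 - 1 / 4 * x ≤ 0 := by
  have h := pi_mul_pow_five_sub_nonneg hc (le_neg_of_le_neg hx)
  have hodd : π * (-x) ^ 5 - c * (-x) ^ 3 - 1 / 4 * (-x) =
      -(π * x ^ 5 - c * x ^ 3 - 1 / 4 * x) := by ring
  linarith

theorem fn_sign (a Y : ℝ) (ha1 : 2 ≤ a)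
    (hY1 : 0 ≤ Y) (hY2 : Y ≤ 1/2) (n : ℤ) (hn : 2 ≤ n) :
    0 ≤ (Real.pi * ((n : ℝ) - Y)^5 - (5 / a) * ((n : ℝ) - Y)^3 - (1/4) * ((n : ℝ) - Y)) *
        Real.exp (-a * Real.pi * ((n : ℝ) - Y)^2) ∧
    (Real.pi * (((-n : ℤ) : ℝ) - Y)^5 - (5 / a) * (((-n : ℤ) : ℝ) - Y)^3 -
        (1/4) * (((-n : ℤ) : ℝ) - Y)) *
      Real.exp (-a * Real.pi * (((-n : ℤ) : ℝ) - Y)^2) ≤ 0 := by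
  have hn' : (2 : ℝ) ≤ n := by exact_mod_cast hn
  have hc : 5 / a ≤ 5 / 2 := div_le_div_of_nonneg_left (by norm_num) (by norm_num) ha1
  push_cast
  exact ⟨mul_nonneg (pi_mul_pow_five_sub_nonneg hc (by linarith)) (exp_pos _).le,
    mul_nonpos_of_nonpos_of_nonneg (pi_mul_pow_five_sub_nonpos hc (by linarith)) (exp_pos _).le⟩
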